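/- For P ∈ H_{p,q} with n + p + q − 1 > 0, the polynomial z_j P(z) − (|z|²/(n+p+q−1)) ∂P/∂z̄_j is harmonic; consequently z_j P(z) admits the decomposition z_j P(z) = P₀(z) + (|z|²/(n+p+q−1)) ∂P/∂z̄_j with P₀ ∈ H_{p+1,q}. -/

import Mathlib

open Complex

noncomputable section

/-- Wirtinger derivative ∂/∂z_j = (1/2)(∂/∂x_j − i ∂/∂y_j). -/
def wderiv {n : ℕ} (j : Fin n) (f : (Fin n → ℂ) → ℂ) (z : Fin n → ℂ) : ℂ :=
  (1 / 2 : ℂ) * (fderiv ℝ f z (Pi.single j 1) - Complex.I * fderiv ℝ f z (Pi.single j Complex.I))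

/-- Conjugate Wirtinger derivative ∂/∂z̄_j = (1/2)(∂/∂x_j + i ∂/∂y_j). -/
def wderivBar {n : ℕ} (j : Fin n) (f : (Fin n → ℂ) → ℂ) (z : Fin n → ℂ) : ℂ :=
  (1 / 2 : ℂ) * (fderiv ℝ f z (Pi.single j 1) + Complex.I * fderiv ℝ f z (Pi.single j Complex.I))

/-- The Laplacian on ℂⁿ ≅ ℝ^{2n}: Δ = 4 Σ_k ∂²/(∂z_k ∂z̄_k). -/
def lap {n : ℕ} (f : (Fin n → ℂ) → ℂ) (z : Fin n → ℂ) : ℂ :=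
  4 * ∑ k, wderiv k (fun w => wderivBar k f w) z

/-- `f` is a polynomial in `z` and `z̄`. -/
def IsPolyZZbar {n : ℕ} (f : (Fin n → ℂ) → ℂ) : Prop :=
  ∃ Q : MvPolynomial ((Fin n) ⊕ (Fin n)) ℂ,
    ∀ z, f z = MvPolynomial.eval (Sum.elim z (fun j => (starRingEnd ℂ) (z j))) Q

/-- `|z|²` as a complex number: `∑ z_k z̄_k`. -/
def nsq {n : ℕ} (z : Fin n → ℂ) : ℂ := ∑ k, z k * (starRingEnd ℂ) (z k)

/-- `f` is bigraded homogeneous of bidegree `(p,q)`: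
`f(λz) = λ^p λ̄^q f(z)` for all `λ ∈ ℂ`. -/
def BiHomogeneous {n : ℕ} (p q : ℕ) (f : (Fin n → ℂ) → ℂ) : Prop :=
  ∀ (c : ℂ) (z : Fin n → ℂ), f (c • z) = c ^ p * (starRingEnd ℂ) c ^ q * f z

/-- `f` belongs to `H_{p,q}`: a bigraded harmonic polynomial of bidegree `(p,q)`. -/
def IsBigradedHarmonic {n : ℕ} (p q : ℕ) (f : (Fin n → ℂ) → ℂ) : Prop :=
  IsPolyZZbar f ∧ BiHomogeneous p q f ∧ ∀ z, lap f z = 0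

/-!
Write `P(z) = Q(z, z̄)` with `Q` a polynomial in `2n` variables. Then `∂/∂z_k` and `∂/∂z̄_k` become
partial derivatives of `Q`, and `Δ/4` becomes `L = ∑ₖ ∂_{z_k} ∂_{z̄_k}`, for which
`L(z_j Q) = z_j LQ + ∂̄_j Q` and `L(|z|² R) = |z|² LR + (n + E) R`, with `E` the Euler operator.
For `R = ∂̄_j Q` we have `LR = ∂̄_j LQ = 0` and, differentiating Euler's identity
`EQ = (p + q) Q`, `ER = (p + q - 1) R`; hence `L` kills `z_j Q - |z|² ∂̄_j Q / (n + p + q - 1)`.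
The identities for `Q` hold only as functions of `z`, so they are transported to `∂̄_j Q` by
applying `∂/∂z̄_j` to functions. The bidegree of the correction term comes from the chain rule
`∂̄_j (P(c ·)) = c̄ (∂̄_j P)(c ·)`.
-/

namespace MvPolynomial

variable {R σ ι : Type*} [CommSemiring R]

theorem pderiv_pderiv_comm (i i' : σ) (Q : MvPolynomial σ R) :
    pderiv i (pderiv i' Q) = pderiv i' (pderiv i Q) := by
  classical
  induction Q using MvPolynomial.induction_on with
  | C a => simp
  | add f g hf hg => simp [hf, hg]
  | mul_X f s hf =>
    simp only [pderiv_mul, pderiv_X, map_add, Pi.single_apply]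
    split_ifs <;> simp [hf, add_comm, add_left_comm]

def euler [Fintype σ] : MvPolynomial σ R →ₗ[R] MvPolynomial σ R :=
  ∑ i, LinearMap.mulLeft R (X i) ∘ₗ (pderiv i).toLinearMap

theorem euler_apply [Fintype σ] (Q : MvPolynomial σ R) :
    euler Q = ∑ i, X i * pderiv i Q := by
  simp [euler]

theorem pderiv_euler [Fintype σ] (i : σ) (Q : MvPolynomial σ R) :
    pderiv i (euler Q) = euler (pderiv i Q) + pderiv i Q := by
  classical
  simp only [euler_apply, map_sum, pderiv_mul, pderiv_X, Pi.single_apply, ite_mul, one_mul,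
    zero_mul, Finset.sum_add_distrib, Finset.sum_ite_eq', Finset.mem_univ, if_true,
    pderiv_pderiv_comm i]
  ring

def wirtingerLaplacian [Fintype ι] : MvPolynomial (ι ⊕ ι) R →ₗ[R] MvPolynomial (ι ⊕ ι) R :=
  ∑ k, (pderiv (Sum.inl k)).toLinearMap ∘ₗ (pderiv (Sum.inr k)).toLinearMap

theorem wirtingerLaplacian_apply [Fintype ι] (Q : MvPolynomial (ι ⊕ ι) R) :
    wirtingerLaplacian Q = ∑ k, pderiv (Sum.inl k) (pderiv (Sum.inr k) Q) := by
  simp [wirtingerLaplacian]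

theorem pderiv_wirtingerLaplacian [Fintype ι] (i : ι ⊕ ι) (Q : MvPolynomial (ι ⊕ ι) R) :
    pderiv i (wirtingerLaplacian Q) = wirtingerLaplacian (pderiv i Q) := by
  simp only [wirtingerLaplacian_apply, map_sum, pderiv_pderiv_comm i]

theorem wirtingerLaplacian_X_inl_mul [Fintype ι] (j : ι) (Q : MvPolynomial (ι ⊕ ι) R) :
    wirtingerLaplacian (X (Sum.inl j) * Q) =
      X (Sum.inl j) * wirtingerLaplacian Q + pderiv (Sum.inr j) Q := by
  classical
  simp only [wirtingerLaplacian_apply, pderiv_mul, pderiv_X, Pi.single_apply, Sum.inl.injEq,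
    reduceCtorEq, if_false, zero_mul, zero_add, ite_mul, one_mul, Finset.mul_sum,
    Finset.sum_add_distrib, Finset.sum_ite_eq, Finset.mem_univ, if_true]
  ring

def wirtingerNormSq (ι R : Type*) [CommSemiring R] [Fintype ι] : MvPolynomial (ι ⊕ ι) R :=
  ∑ k, X (Sum.inl k) * X (Sum.inr k)

theorem pderiv_inl_wirtingerNormSq [Fintype ι] (k : ι) :
    pderiv (Sum.inl k) (wirtingerNormSq ι R) = X (Sum.inr k) := by
  classical
  simp [wirtingerNormSq, pderiv_X, Pi.single_apply]

theorem pderiv_inr_wirtingerNormSq [Fintype ι] (k : ι) :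
    pderiv (Sum.inr k) (wirtingerNormSq ι R) = X (Sum.inl k) := by
  classical
  simp [wirtingerNormSq, pderiv_X, Pi.single_apply]

theorem wirtingerLaplacian_wirtingerNormSq_mul [Fintype ι] (Q : MvPolynomial (ι ⊕ ι) R) :
    wirtingerLaplacian (wirtingerNormSq ι R * Q) =
      wirtingerNormSq ι R * wirtingerLaplacian Q + euler Q + Fintype.card ι • Q := by
  classical
  simp only [wirtingerLaplacian_apply, euler_apply, Fintype.sum_sum_type, pderiv_mul,
    pderiv_inl_wirtingerNormSq, pderiv_inr_wirtingerNormSq, map_add, pderiv_X_self, Finset.mul_sum,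
    Finset.sum_add_distrib, Finset.sum_const, Finset.card_univ]
  ring

end MvPolynomial

open MvPolynomial ComplexConjugate

theorem apply_smul_add_I_mul_apply_smul_I {E : Type*} [NormedAddCommGroup E] [NormedSpace ℂ E]
    (L : E →L[ℝ] ℂ) (c : ℂ) (v : E) :
    L (c • v) + I * L (c • I • v) = conj c * (L v + I * L (I • v)) := by
  have hsplit (w : E) : L (c • w) = c.re * L w + c.im * L (I • w) := by
    conv_lhs => rw [← Complex.re_add_im c]
    rw [add_smul, mul_smul, Complex.coe_smul, Complex.coe_smul, map_add, map_smul, map_smul,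
      Complex.real_smul, Complex.real_smul]
  rw [hsplit, hsplit, smul_smul, I_mul_I, neg_one_smul, map_neg]
  conv_rhs => rw [← Complex.re_add_im c]
  simp only [map_add, map_mul, conj_ofReal, conj_I]
  ring_nf
  simp only [I_sq]
  ring

section Wirtinger

variable {n : ℕ}

def zzbar (z : Fin n → ℂ) : Fin n ⊕ Fin n → ℂ := Sum.elim z fun k => conj (z k)

def zzbarCLM : Fin n ⊕ Fin n → (Fin n → ℂ) →L[ℝ] ℂ :=
  Sum.elim (ContinuousLinearMap.proj (R := ℝ) (φ := fun _ : Fin n => ℂ))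
    fun k => conjCLE.toContinuousLinearMap ∘L ContinuousLinearMap.proj k

theorem zzbarCLM_apply (i : Fin n ⊕ Fin n) (z : Fin n → ℂ) : zzbarCLM i z = zzbar z i := by
  cases i <;> simp [zzbarCLM, zzbar]

theorem hasFDerivAt_eval_zzbar (Q : MvPolynomial (Fin n ⊕ Fin n) ℂ) (z : Fin n → ℂ) :
    HasFDerivAt (fun w => eval (zzbar w) Q)
      (∑ i, eval (zzbar z) (pderiv i Q) • zzbarCLM i) z := by
  classical
  induction Q using MvPolynomial.induction_on with
  | C a =>
    simp only [eval_C]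
    refine (hasFDerivAt_const a z).congr_fderiv ?_
    ext v
    simp
  | add f g hf hg =>
    simp only [map_add]
    refine (hf.fun_add hg).congr_fderiv ?_
    ext v
    simp only [add_apply, sum_apply, smul_apply, smul_eq_mul, add_mul, Finset.sum_add_distrib]
  | mul_X f i hf =>
    have hX : HasFDerivAt (fun w => zzbar w i) (zzbarCLM i) z := by
      simpa only [funext (zzbarCLM_apply i)] using (zzbarCLM i).hasFDerivAt
    simp only [eval_mul, eval_X]
    refine (hf.fun_mul hX).congr_fderiv ?_
    ext v
    simp only [add_apply, sum_apply, smul_apply, smul_eq_mul, pderiv_mul, pderiv_X,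
      Pi.single_apply, map_add, map_mul, eval_X, apply_ite (eval (zzbar z)), map_zero, mul_ite,
      mul_one, mul_zero, add_mul, ite_mul, zero_mul, Finset.sum_add_distrib, Finset.sum_ite_eq,
      Finset.mem_univ, if_true, Finset.mul_sum]
    ring_nf

theorem sum_smul_zzbarCLM_apply_single (a : Fin n ⊕ Fin n → ℂ) (j : Fin n) (c : ℂ) :
    (∑ i, a i • zzbarCLM i) (Pi.single j c) = a (Sum.inl j) * c + a (Sum.inr j) * conj c := by
  classical
  simp [Fintype.sum_sum_type, zzbarCLM_apply, zzbar, Pi.single_apply, apply_ite (starRingEnd ℂ)]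

theorem wderiv_eval_zzbar (Q : MvPolynomial (Fin n ⊕ Fin n) ℂ) (j : Fin n) (z : Fin n → ℂ) :
    wderiv j (fun w => eval (zzbar w) Q) z = eval (zzbar z) (pderiv (Sum.inl j) Q) := by
  rw [wderiv, (hasFDerivAt_eval_zzbar Q z).fderiv, sum_smul_zzbarCLM_apply_single,
    sum_smul_zzbarCLM_apply_single]
  simp only [map_one, conj_I]
  ring_nf
  simp only [I_sq]
  ring

theorem wderivBar_eval_zzbar (Q : MvPolynomial (Fin n ⊕ Fin n) ℂ) (j : Fin n) (z : Fin n → ℂ) :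
    wderivBar j (fun w => eval (zzbar w) Q) z = eval (zzbar z) (pderiv (Sum.inr j) Q) := by
  rw [wderivBar, (hasFDerivAt_eval_zzbar Q z).fderiv, sum_smul_zzbarCLM_apply_single,
    sum_smul_zzbarCLM_apply_single]
  simp only [map_one, conj_I]
  ring_nf
  simp only [I_sq]
  ring

theorem lap_eval_zzbar (Q : MvPolynomial (Fin n ⊕ Fin n) ℂ) (z : Fin n → ℂ) :
    lap (fun w => eval (zzbar w) Q) z = 4 * eval (zzbar z) (wirtingerLaplacian Q) := by
  simp only [lap, wderivBar_eval_zzbar, wderiv_eval_zzbar, wirtingerLaplacian_apply, map_sum]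

theorem eval_zzbar_pderiv_inr_congr {A B : MvPolynomial (Fin n ⊕ Fin n) ℂ}
    (h : ∀ w, eval (zzbar w) A = eval (zzbar w) B) (j : Fin n) (z : Fin n → ℂ) :
    eval (zzbar z) (pderiv (Sum.inr j) A) = eval (zzbar z) (pderiv (Sum.inr j) B) := by
  rw [← wderivBar_eval_zzbar, ← wderivBar_eval_zzbar, funext h]

theorem eval_zzbar_euler {p q : ℕ} {Q : MvPolynomial (Fin n ⊕ Fin n) ℂ}
    (hQ : BiHomogeneous p q fun w => eval (zzbar w) Q) (z : Fin n → ℂ) :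
    eval (zzbar z) (euler Q) = (p + q) * eval (zzbar z) Q := by
  have hray : HasDerivAt (fun t : ℝ => t • z) z 1 := by
    simpa using (hasDerivAt_id (1 : ℝ)).smul_const z
  have hlhs := (hasFDerivAt_eval_zzbar Q ((1 : ℝ) • z)).comp_hasDerivAt (1 : ℝ) hray
  have hrhs : HasDerivAt (fun t : ℝ => ((t ^ (p + q) : ℝ) : ℂ) * eval (zzbar z) Q)
      ((p + q) * eval (zzbar z) Q) 1 := by
    simpa using ((hasDerivAt_pow (p + q) (1 : ℝ)).ofReal_comp).mul_const (eval (zzbar z) Q)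
  have hray_eval (t : ℝ) :
      eval (zzbar (t • z)) Q = ((t ^ (p + q) : ℝ) : ℂ) * eval (zzbar z) Q := by
    have h := hQ t z
    dsimp only at h
    rw [← Complex.coe_smul, h, Complex.conj_ofReal]
    push_cast
    ring
  simp only [Function.comp_def, hray_eval, one_smul] at hlhs
  rw [← hlhs.unique hrhs, euler_apply, map_sum]
  simp [zzbarCLM_apply, mul_comm]

theorem differentiable_eval_zzbar (Q : MvPolynomial (Fin n ⊕ Fin n) ℂ) :
    Differentiable ℝ fun w => eval (zzbar w) Q :=
  fun z => (hasFDerivAt_eval_zzbar Q z).differentiableAt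

theorem wderivBar_comp_smul {f : (Fin n → ℂ) → ℂ} {c : ℂ} {z : Fin n → ℂ}
    (hf : DifferentiableAt ℝ f (c • z)) (j : Fin n) :
    wderivBar j (fun w => f (c • w)) z = conj c * wderivBar j f (c • z) := by
  have hsmul : HasFDerivAt (fun w : Fin n → ℂ => c • w) (c • ContinuousLinearMap.id ℝ _) z :=
    (hasFDerivAt_id z).const_smul c
  have hcomp : HasFDerivAt (fun w => f (c • w))
      ((fderiv ℝ f (c • z)).comp (c • ContinuousLinearMap.id ℝ _)) z :=
    hf.hasFDerivAt.comp z hsmul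
  rw [wderivBar, wderivBar, hcomp.fderiv]
  simp only [ContinuousLinearMap.comp_apply, smul_apply, ContinuousLinearMap.id_apply]
  have hI : (Pi.single j I : Fin n → ℂ) = I • Pi.single j 1 := by
    rw [← Pi.single_smul, smul_eq_mul, mul_one]
  rw [hI, apply_smul_add_I_mul_apply_smul_I]
  ring

theorem wderivBar_const_mul {f : (Fin n → ℂ) → ℂ} {z : Fin n → ℂ} (hf : DifferentiableAt ℝ f z)
    (a : ℂ) (j : Fin n) : wderivBar j (fun w => a * f w) z = a * wderivBar j f z := by
  rw [wderivBar, wderivBar, fderiv_const_mul hf]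
  simp only [smul_apply, smul_eq_mul]
  ring

theorem nsq_smul (c : ℂ) (z : Fin n → ℂ) : nsq (c • z) = c * conj c * nsq z := by
  simp only [nsq, Pi.smul_apply, smul_eq_mul, map_mul, Finset.mul_sum]
  exact Finset.sum_congr rfl fun _ _ => by ring

theorem BiHomogeneous.conj_mul_wderivBar_smul {p q : ℕ} {P : (Fin n → ℂ) → ℂ}
    (hP : BiHomogeneous p q P) (hd : Differentiable ℝ P) (j : Fin n) (c : ℂ) (z : Fin n → ℂ) :
    conj c * wderivBar j P (c • z) = c ^ p * conj c ^ q * wderivBar j P z := by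
  rw [← wderivBar_comp_smul (hd _), funext (hP c), wderivBar_const_mul (hd z)]

theorem BiHomogeneous.coord_mul_sub_nsq_mul_wderivBar {p q : ℕ} {P : (Fin n → ℂ) → ℂ}
    (hP : BiHomogeneous p q P) (hd : Differentiable ℝ P) (j : Fin n) (κ : ℂ) :
    BiHomogeneous (p + 1) q fun w => w j * P w - nsq w / κ * wderivBar j P w := by
  intro c z
  have h := hP.conj_mul_wderivBar_smul hd j c z
  simp only [Pi.smul_apply, smul_eq_mul, hP c z, nsq_smul]
  linear_combination (-(c * nsq z / κ)) * h

theorem eval_zzbar_X_inl_mul_sub (Q : MvPolynomial (Fin n ⊕ Fin n) ℂ) (j : Fin n) (κ : ℂ)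
    (w : Fin n → ℂ) :
    eval (zzbar w) (X (Sum.inl j) * Q - κ⁻¹ • (wirtingerNormSq (Fin n) ℂ * pderiv (Sum.inr j) Q))
      = w j * eval (zzbar w) Q - nsq w / κ * wderivBar j (fun w => eval (zzbar w) Q) w := by
  rw [wderivBar_eval_zzbar]
  simp [wirtingerNormSq, nsq, zzbar, smul_eval, div_eq_inv_mul, mul_assoc]

theorem eval_zzbar_wirtingerLaplacian_X_inl_mul_sub {p q : ℕ} {Q : MvPolynomial (Fin n ⊕ Fin n) ℂ}
    (hΔ : ∀ w, eval (zzbar w) (wirtingerLaplacian Q) = 0)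
    (hQ : BiHomogeneous p q fun w => eval (zzbar w) Q) (hκ : (n : ℂ) + p + q - 1 ≠ 0)
    (j : Fin n) (z : Fin n → ℂ) :
    eval (zzbar z) (wirtingerLaplacian (X (Sum.inl j) * Q
      - ((n : ℂ) + p + q - 1)⁻¹ • (wirtingerNormSq (Fin n) ℂ * pderiv (Sum.inr j) Q))) = 0 := by
  have hΔ' : eval (zzbar z) (wirtingerLaplacian (pderiv (Sum.inr j) Q)) = 0 := by
    rw [← pderiv_wirtingerLaplacian]
    simpa using eval_zzbar_pderiv_inr_congr (B := 0) (by simpa using hΔ) j z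
  have hE : eval (zzbar z) (pderiv (Sum.inr j) (euler Q))
      = (p + q) * eval (zzbar z) (pderiv (Sum.inr j) Q) := by
    rw [eval_zzbar_pderiv_inr_congr (B := ((p : ℂ) + q) • Q)
      (fun w => by rw [smul_eval, eval_zzbar_euler hQ]) j z, Derivation.map_smul, smul_eval]
  rw [pderiv_euler, eval_add] at hE
  rw [map_sub, map_smul, wirtingerLaplacian_X_inl_mul, wirtingerLaplacian_wirtingerNormSq_mul]
  simp only [eval_sub, eval_add, eval_mul, smul_eval, nsmul_eq_mul, map_natCast, Fintype.card_fin,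
    hΔ, hΔ']
  linear_combination (-((n : ℂ) + p + q - 1)⁻¹) * hE
    - eval (zzbar z) (pderiv (Sum.inr j) Q) * inv_mul_cancel₀ hκ

theorem IsBigradedHarmonic.coord_mul_sub_nsq_mul_wderivBar {p q : ℕ} {P : (Fin n → ℂ) → ℂ}
    (hP : IsBigradedHarmonic p q P) (hκ : (n : ℂ) + p + q - 1 ≠ 0) (j : Fin n) :
    IsBigradedHarmonic (p + 1) q
      fun w => w j * P w - nsq w / ((n : ℂ) + p + q - 1) * wderivBar j P w := by
  obtain ⟨⟨Q, hQ⟩, hHom, hLap⟩ := hP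
  obtain rfl : P = fun w => eval (zzbar w) Q := funext hQ
  have hΔ (w : Fin n → ℂ) : eval (zzbar w) (wirtingerLaplacian Q) = 0 := by
    simpa [lap_eval_zzbar] using hLap w
  have hrep := funext (eval_zzbar_X_inl_mul_sub Q j ((n : ℂ) + p + q - 1))
  refine ⟨⟨_, fun w => (congrFun hrep w).symm⟩,
    hHom.coord_mul_sub_nsq_mul_wderivBar (differentiable_eval_zzbar Q) j _, fun z => ?_⟩
  rw [← hrep, lap_eval_zzbar, eval_zzbar_wirtingerLaplacian_X_inl_mul_sub hΔ hHom hκ, mul_zero]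

end Wirtinger

theorem stmt3 {n : ℕ} (p q : ℕ) (P : (Fin n → ℂ) → ℂ)
    (hP : IsBigradedHarmonic p q P) (hnpq : 0 < n + p + q - 1) (j : Fin n) :
    (∀ z, lap (fun w => w j * P w - nsq w / ((n : ℂ) + p + q - 1) * wderivBar j P w) z = 0) ∧
      ∃ P₀ : (Fin n → ℂ) → ℂ, IsBigradedHarmonic (p + 1) q P₀ ∧
        ∀ z, z j * P z = P₀ z + nsq z / ((n : ℂ) + p + q - 1) * wderivBar j P z := by
  have hκ : (n : ℂ) + p + q - 1 ≠ 0 := by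
    have h : ((n + p + q - 1 : ℕ) : ℂ) ≠ 0 := Nat.cast_ne_zero.mpr hnpq.ne'
    rwa [Nat.cast_sub (by omega), Nat.cast_add, Nat.cast_add, Nat.cast_one] at h
  have hP₀ := hP.coord_mul_sub_nsq_mul_wderivBar hκ j
  exact ⟨hP₀.2.2, _, hP₀, fun z => by ring⟩
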